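/- Let E and E' be elliptic curves over a field k of characteristic 0, n a positive integer, φ: E → E' a cyclic k-isogeny of degree d, and m = gcd(d,n). Then there is a short exact sequence of Galois modules 0 → Hom(φ(E_m), E'_m) → Hom(E_n, E'_n) → H → 0, where the first map is f ↦ f∘φ∘[n/m], the second is g ↦ g∘φ^∨, and H = {f ∈ End(E'_n) : f∘φ∘[n/m] = 0}. -/

import Mathlib

def nTorsion (n : ℕ) (A : Type) [AddCommGroup A] : AddSubgroup A where
  carrier := {x | n • x = 0}
  zero_mem' := by simp
  add_mem' := by
    intro a b ha hb
    simp only [Set.mem_setOf_eq] at *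
    rw [smul_add, ha, hb, add_zero]
  neg_mem' := by
    intro a ha
    simp only [Set.mem_setOf_eq] at *
    rw [smul_neg, ha, neg_zero]

def restrictHom {A B : Type} [AddCommGroup A] [AddCommGroup B] (g : A →+ B)
    (S : AddSubgroup A) (T : AddSubgroup B) (h : ∀ x ∈ S, g x ∈ T) : S →+ T where
  toFun x := ⟨g x, h x x.2⟩
  map_zero' := Subtype.ext (by simp)
  map_add' a b := Subtype.ext (by simp)

def torsMap {A B : Type} [AddCommGroup A] [AddCommGroup B] (n : ℕ) (g : A →+ B) :
    nTorsion n A →+ nTorsion n B :=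
  restrictHom g (nTorsion n A) (nTorsion n B) (by
    intro x hx
    show n • g x = 0
    rw [← map_nsmul, show n • x = 0 from hx, map_zero])

/-!
Write `m = gcd(d, n)`, `a = n / m`, `b = d / m`. Everything rests on the exactness of
`E'_n --φ^∨--> E_n --φ∘[a]--> E'_n --φ^∨--> E_n` at its two middle terms, together with the
surjectivity of `φ ∘ [a] : E_n → φ(E_m)` (divisibility of `E`). Given exactness, `α` is injective
and its image is the kernel of `β` by left exactness of `Hom(-, E'_n)`; the image of `β` is all
of `H` because `E'` is divisible, hence an injective `ℤ`-module, and any homomorphism from `E_n`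
to `E'` lands in `E'_n`.

Exactness itself uses that `ker φ` is cyclic of order `d`, so that an element of it killed by `s`
is a multiple of `d / s`, together with a Bézout relation `u a + v b = 1` for the coprime `a, b`.
-/

section Torsion

variable {A B C : Type} [AddCommGroup A] [AddCommGroup B] [AddCommGroup C]

@[simp]
theorem coe_restrictHom_apply (g : A →+ B) (S : AddSubgroup A) (T : AddSubgroup B)
    (h : ∀ x ∈ S, g x ∈ T) (x : S) : (restrictHom g S T h x : B) = g x :=
  rfl

@[simp]
theorem coe_torsMap_apply (n : ℕ) (g : A →+ B) (x : nTorsion n A) :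
    (torsMap n g x : B) = g x :=
  rfl

theorem nsmul_nTorsion_eq_zero {n : ℕ} (x : nTorsion n A) : n • x = 0 :=
  Subtype.ext x.2

theorem map_mem_nTorsion {n : ℕ} (f : C →+ A) (hC : ∀ c : C, n • c = 0) (c : C) :
    f c ∈ nTorsion n A := by
  show n • f c = 0
  rw [← map_nsmul, hC, map_zero]

theorem map_nTorsion_le (g : A →+ B) (m : ℕ) :
    (nTorsion m A).map g ≤ nTorsion m B := by
  rintro _ ⟨x, hx, rfl⟩
  exact map_mem_nTorsion (g.comp (nTorsion m A).subtype) nsmul_nTorsion_eq_zero ⟨x, hx⟩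

end Torsion

theorem div_gcd_nsmul_nsmul_eq_zero {G : Type} [AddMonoid G] {d n : ℕ} {z : G}
    (hz : n • z = 0) : (n / d.gcd n) • d • z = 0 := by
  rw [← mul_smul, Nat.div_mul_right_comm (Nat.gcd_dvd_right d n), mul_comm,
    ← Nat.div_mul_right_comm (Nat.gcd_dvd_left d n), mul_smul, hz, smul_zero]

theorem IsAddCyclic.exists_nsmul_eq_of_nsmul_eq_zero {G : Type} [AddGroup G] [IsAddCyclic G]
    {r s : ℕ} (hcard : Nat.card G = r * s) (hs : s ≠ 0) {u : G} (hu : s • u = 0) :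
    ∃ c : G, r • c = u := by
  obtain ⟨g, hg⟩ := IsAddCyclic.exists_generator (α := G)
  obtain ⟨k, rfl⟩ := AddSubgroup.mem_zmultiples_iff.mp (hg u)
  have hdvd : ((r : ℤ) * s) ∣ k * s := by
    rw [← Nat.cast_mul, ← hcard, ← addOrderOf_eq_card_of_forall_mem_zmultiples hg,
      addOrderOf_dvd_iff_zsmul_eq_zero, mul_comm, mul_smul, natCast_zsmul, hu]
  obtain ⟨j, rfl⟩ := Int.dvd_of_mul_dvd_mul_right (by exact_mod_cast hs) hdvd
  exact ⟨j • g, by rw [← natCast_zsmul, ← mul_smul]⟩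

section Isogeny

variable {E E' : Type} [AddCommGroup E] [AddCommGroup E'] (φ : E →+ E') (φdual : E' →+ E)
  {d : ℕ}

theorem mem_map_nTorsion_of_dual_eq_zero (hd : 0 < d) (hφsurj : Function.Surjective φ)
    (hφker : Nat.card φ.ker = d) [IsAddCyclic φ.ker]
    (hdual₁ : ∀ x, φdual (φ x) = d • x) (hdual₂ : ∀ y, φ (φdual y) = d • y)
    {n : ℕ} {y : E'} (hy : n • y = 0) (hdy : φdual y = 0) :
    y ∈ (nTorsion (d.gcd n) E).map φ := by
  set m := d.gcd n
  have hmd : m ∣ d := Nat.gcd_dvd_left d n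
  obtain ⟨w, rfl⟩ := hφsurj y
  have hmy : m • φ w = 0 := by
    have hdy' : d • φ w = 0 := by rw [← hdual₂, hdy, map_zero]
    exact addOrderOf_dvd_iff_nsmul_eq_zero.mp (Nat.dvd_gcd
      (addOrderOf_dvd_of_nsmul_eq_zero hdy') (addOrderOf_dvd_of_nsmul_eq_zero hy))
  have hmw : m • w ∈ φ.ker := by rwa [AddMonoidHom.mem_ker, map_nsmul]
  have hdw : (d / m) • (⟨m • w, hmw⟩ : φ.ker) = 0 := by
    apply Subtype.ext
    rw [AddSubgroup.coe_nsmul, ← mul_smul, Nat.div_mul_cancel hmd, ← hdual₁, hdy,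
      AddSubgroup.coe_zero]
  obtain ⟨c, hc⟩ := IsAddCyclic.exists_nsmul_eq_of_nsmul_eq_zero
    (by rw [hφker, Nat.mul_div_cancel' hmd]) (Nat.div_pos (Nat.le_of_dvd hd hmd)
      (Nat.gcd_pos_of_pos_left n hd)).ne' hdw
  refine AddSubgroup.mem_map.mpr ⟨w - c, ?_, ?_⟩
  · show m • (w - c) = 0
    rw [smul_sub, ← AddSubgroup.coe_nsmul, hc, sub_self]
  · rw [map_sub, c.2, sub_zero]

theorem mem_map_nTorsion_dual_of_nsmul_map_eq_zero
    (hdivE : ∀ k : ℕ, 0 < k → Function.Surjective fun x : E => k • x) (hd : 0 < d)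
    (hφker : Nat.card φ.ker = d) [IsAddCyclic φ.ker] (hdual₁ : ∀ x, φdual (φ x) = d • x)
    {n : ℕ} {x : E} (hx : n • x = 0) (hφx : (n / d.gcd n) • φ x = 0) :
    x ∈ (nTorsion n E').map φdual := by
  set m := d.gcd n
  set a := n / m
  set b := d / m
  have hm : 0 < m := Nat.gcd_pos_of_pos_left n hd
  have hnm : n = a * m := (Nat.div_mul_cancel (Nat.gcd_dvd_right d n)).symm
  have hdm : d = b * m := (Nat.div_mul_cancel (Nat.gcd_dvd_left d n)).symm
  obtain ⟨u, v, huv⟩ : IsCoprime (a : ℤ) b :=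
    Nat.isCoprime_iff_coprime.mpr (Nat.coprime_div_gcd_div_gcd hm).symm
  have hax : a • x ∈ φ.ker := by rwa [AddMonoidHom.mem_ker, map_nsmul]
  have hmax : m • (⟨a • x, hax⟩ : φ.ker) = 0 :=
    Subtype.ext (by rw [AddSubgroup.coe_nsmul, ← mul_smul, mul_comm, ← hnm, hx]; rfl)
  obtain ⟨c, hc⟩ := IsAddCyclic.exists_nsmul_eq_of_nsmul_eq_zero (by rw [hφker, hdm]) hm.ne' hmax
  have hbc : b • (c : E) = a • x := congrArg Subtype.val hc
  -- `φ z` is the preimage: `d • z = v b • x + u b • c = (v b + u a) • x` and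
  -- `n • φ z = a • φ (m • z) = v • a • φ x`
  obtain ⟨z, hz⟩ := hdivE m hm (v • x + u • (c : E))
  have hz : m • z = v • x + u • (c : E) := hz
  have hφz : m • φ z = v • φ x := by
    rw [← map_nsmul, hz, map_add, map_zsmul, map_zsmul, c.2, smul_zero, add_zero]
  refine AddSubgroup.mem_map.mpr ⟨φ z, ?_, ?_⟩
  · show n • φ z = 0
    rw [hnm]
    linear_combination (norm := module) a • hφz + v • hφx
  · rw [hdual₁, hdm]
    linear_combination (norm := module) b • hz + u • hbc + huv • x

theorem map_nTorsion_le_map_nsmul_nTorsion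
    (hdivE : ∀ k : ℕ, 0 < k → Function.Surjective fun x : E => k • x) {m n : ℕ} (hmn : m ∣ n)
    (hn : 0 < n) : (nTorsion m E).map φ ≤ (nTorsion n E).map ((n / m) • φ) := by
  rintro _ ⟨w, hw, rfl⟩
  obtain ⟨x, hx⟩ :=
    hdivE (n / m) (Nat.div_pos (Nat.le_of_dvd hn hmn) (Nat.pos_of_dvd_of_pos hmn hn)) w
  refine ⟨x, ?_, ?_⟩
  · show n • x = 0
    rw [← Nat.mul_div_cancel' hmn, mul_smul]
    exact (congrArg (m • ·) hx).trans hw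
  · simp only [AddMonoidHom.smul_apply, ← map_nsmul]
    exact congrArg φ hx

theorem ker_restrictHom_nsmul_eq_range_torsMap
    (hdivE : ∀ k : ℕ, 0 < k → Function.Surjective fun x : E => k • x) (hd : 0 < d)
    (hφker : Nat.card φ.ker = d) [IsAddCyclic φ.ker]
    (hdual₁ : ∀ x, φdual (φ x) = d • x) (hdual₂ : ∀ y, φ (φdual y) = d • y)
    {n : ℕ} {T : AddSubgroup E'} (hT : ∀ x ∈ nTorsion n E, ((n / d.gcd n) • φ) x ∈ T) :
    (restrictHom ((n / d.gcd n) • φ) (nTorsion n E) T hT).ker = (torsMap n φdual).range := by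
  ext x
  simp only [AddMonoidHom.mem_ker, AddMonoidHom.mem_range, Subtype.ext_iff,
    coe_restrictHom_apply, coe_torsMap_apply, AddSubgroup.coe_zero, AddMonoidHom.smul_apply]
  constructor
  · intro hx
    obtain ⟨y, hy, hyx⟩ := AddSubgroup.mem_map.mp
      (mem_map_nTorsion_dual_of_nsmul_map_eq_zero φ φdual hdivE hd hφker hdual₁ x.2 hx)
    exact ⟨⟨y, hy⟩, hyx⟩
  · rintro ⟨y, hyx⟩
    rw [← hyx, hdual₂]
    exact div_gcd_nsmul_nsmul_eq_zero y.2

theorem ker_torsMap_dual_eq_range_torsMap_nsmul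
    (hdivE : ∀ k : ℕ, 0 < k → Function.Surjective fun x : E => k • x) (hd : 0 < d)
    (hφsurj : Function.Surjective φ) (hφker : Nat.card φ.ker = d) [IsAddCyclic φ.ker]
    (hdual₁ : ∀ x, φdual (φ x) = d • x) (hdual₂ : ∀ y, φ (φdual y) = d • y)
    {n : ℕ} (hn : 0 < n) :
    (torsMap n φdual).ker = (torsMap n ((n / d.gcd n) • φ)).range := by
  ext y
  simp only [AddMonoidHom.mem_ker, AddMonoidHom.mem_range, Subtype.ext_iff,
    coe_torsMap_apply, AddSubgroup.coe_zero]
  constructor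
  · intro hy
    obtain ⟨x, hx, hxy⟩ := map_nTorsion_le_map_nsmul_nTorsion φ hdivE (Nat.gcd_dvd_right d n) hn
      (mem_map_nTorsion_of_dual_eq_zero φ φdual hd hφsurj hφker hdual₁ hdual₂ y.2 hy)
    exact ⟨⟨x, hx⟩, hxy⟩
  · rintro ⟨x, hxy⟩
    rw [← hxy, AddMonoidHom.smul_apply, map_nsmul, hdual₁]
    exact div_gcd_nsmul_nsmul_eq_zero x.2

end Isogeny

section HomExact

variable {A B C D X : Type} [AddCommGroup A] [AddCommGroup B] [AddCommGroup C] [AddCommGroup D]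
  [AddCommGroup X]

theorem exists_comp_eq_of_divisible
    (hX : ∀ k : ℕ, 0 < k → Function.Surjective fun x : X => k • x)
    (q : C →+ A) (h : C →+ X) (hker : q.ker ≤ h.ker) : ∃ g : A →+ X, g.comp q = h := by
  have : DivisibleBy X ℕ := divisibleByOfSMulRightSurj X ℕ fun hk => hX _ (Nat.pos_of_ne_zero hk)
  have : DivisibleBy X ℤ := AddGroup.divisibleByIntOfDivisibleByNat X
  let h' := q.rangeRestrict.liftOfSurjective q.rangeRestrict_surjective
    ⟨h, by rwa [AddMonoidHom.ker_rangeRestrict]⟩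
  obtain ⟨g, hg⟩ := (Module.Baer.of_divisible X).extension_property_addMonoidHom
    q.range.subtype q.range.subtype_injective h'
  refine ⟨g, ?_⟩
  ext c
  exact (DFunLike.congr_fun hg (q.rangeRestrict c)).trans
    (AddMonoidHom.liftOfRightInverse_comp_apply _ _ _ _ c)

theorem inclusion_comp_comp_injective {S T : AddSubgroup X} (hST : S ≤ T) {P : A →+ B}
    (hP : Function.Surjective P) :
    Function.Injective fun f : B →+ S => (AddSubgroup.inclusion hST).comp (f.comp P) := by
  intro f f' hff
  ext b
  obtain ⟨a, rfl⟩ := hP b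
  exact congrArg Subtype.val (AddSubgroup.inclusion_injective hST (DFunLike.congr_fun hff a))

theorem comp_eq_zero_iff_exists_inclusion_comp {m n : ℕ} (hmn : nTorsion m X ≤ nTorsion n X)
    {P : A →+ B} (hP : Function.Surjective P) (hB : ∀ b : B, m • b = 0) {Q : C →+ A}
    (hPQ : P.ker = Q.range) (g : A →+ nTorsion n X) :
    g.comp Q = 0 ↔ ∃ f : B →+ nTorsion m X, (AddSubgroup.inclusion hmn).comp (f.comp P) = g := by
  constructor
  · intro hg
    have hker : P.ker ≤ g.ker := by
      rw [hPQ]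
      rintro _ ⟨c, rfl⟩
      exact DFunLike.congr_fun hg c
    let g' := P.liftOfSurjective hP ⟨g, hker⟩
    refine ⟨((nTorsion n X).subtype.comp g').codRestrict _ (map_mem_nTorsion _ hB), ?_⟩
    ext a
    exact congrArg Subtype.val
      (P.liftOfRightInverse_comp_apply _ (Function.rightInverse_surjInv hP) _ a)
  · rintro ⟨f, rfl⟩
    ext c
    have hPQc : Q c ∈ P.ker := hPQ ▸ ⟨c, rfl⟩
    simp [AddMonoidHom.mem_ker.mp hPQc]

theorem exists_comp_eq_iff_comp_eq_zero
    (hX : ∀ k : ℕ, 0 < k → Function.Surjective fun x : X => k • x) {n : ℕ}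
    (hA : ∀ a : A, n • a = 0) {Q : C →+ A} {L : D →+ C} (hQL : Q.ker = L.range)
    (h : C →+ nTorsion n X) : (∃ g : A →+ nTorsion n X, g.comp Q = h) ↔ h.comp L = 0 := by
  constructor
  · rintro ⟨g, rfl⟩
    ext x
    have hQLx : L x ∈ Q.ker := hQL ▸ ⟨x, rfl⟩
    simp [AddMonoidHom.mem_ker.mp hQLx]
  · intro hh
    have hker : Q.ker ≤ ((nTorsion n X).subtype.comp h).ker := by
      rw [hQL]
      rintro _ ⟨x, rfl⟩
      simpa using DFunLike.congr_fun hh x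
    obtain ⟨g, hg⟩ := exists_comp_eq_of_divisible hX Q _ hker
    refine ⟨g.codRestrict _ (map_mem_nTorsion g hA), ?_⟩
    ext c
    exact DFunLike.congr_fun hg c

end HomExact

theorem galois_ses_of_torsion_homs
    (Γ : Type) [Group Γ]
    (E E' : Type) [AddCommGroup E] [AddCommGroup E']
    (ρ : Γ →* Multiplicative (AddAut E)) (ρ' : Γ →* Multiplicative (AddAut E'))
    (hdivE : ∀ m : ℕ, 0 < m → Function.Surjective fun x : E => m • x)
    (hdivE' : ∀ m : ℕ, 0 < m → Function.Surjective fun x : E' => m • x)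
    (d : ℕ) (hd : 0 < d)
    (φ : E →+ E') (hφsurj : Function.Surjective φ)
    (hφker : Nat.card φ.ker = d) (hφcyc : IsAddCyclic φ.ker)
    (φdual : E' →+ E)
    (hdual₁ : φdual.comp φ = d • AddMonoidHom.id E)
    (hdual₂ : φ.comp φdual = d • AddMonoidHom.id E')
    (hρφ : ∀ σ : Γ, ∀ x : E, φ ((ρ σ : E ≃+ E) x) = (ρ' σ : E' ≃+ E') (φ x))
    (hρφd : ∀ σ : Γ, ∀ y : E', φdual ((ρ' σ : E' ≃+ E') y) = (ρ σ : E ≃+ E) (φdual y))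
    (n : ℕ) (hn : 0 < n)
    (hstab : ∀ σ : Γ, ∀ y ∈ (nTorsion (Nat.gcd d n) E).map φ,
      (ρ' σ : E' ≃+ E') y ∈ (nTorsion (Nat.gcd d n) E).map φ) :
    let m := Nat.gcd d n
    -- the inclusion `E'_m ⊆ E'_n`
    let incl : nTorsion m E' →+ nTorsion n E' := AddSubgroup.inclusion (by
      intro y hy
      show n • y = 0
      rw [← Nat.div_mul_cancel (Nat.gcd_dvd_right d n), mul_smul,
        show Nat.gcd d n • y = 0 from hy, smul_zero])
    -- the map `φ ∘ [n/m] : E_n → φ(E_m)`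
    let phiRes : nTorsion n E →+ ((nTorsion m E).map φ) :=
      restrictHom ((n / m) • φ) (nTorsion n E) ((nTorsion m E).map φ) (by
        intro x hx
        refine AddSubgroup.mem_map.2 ⟨(n / m) • x, ?_, ?_⟩
        · show Nat.gcd d n • ((n / Nat.gcd d n) • x) = 0
          rw [← mul_smul, Nat.mul_div_cancel' (Nat.gcd_dvd_right d n)]
          exact hx
        · simp)
    -- the map `φ ∘ [n/m] : E_n → E'_n`
    let phiLow : nTorsion n E →+ nTorsion n E' := torsMap n ((n / m) • φ)
    -- the first map of the sequence, `α : f ↦ f ∘ φ ∘ [n/m]`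
    let α : (((nTorsion m E).map φ) →+ nTorsion m E') → (nTorsion n E →+ nTorsion n E') :=
      fun f => incl.comp (f.comp phiRes)
    -- the second map of the sequence, `β : g ↦ g ∘ φ^∨`
    let β : (nTorsion n E →+ nTorsion n E') → (nTorsion n E' →+ nTorsion n E') :=
      fun g => g.comp (torsMap n φdual)
    Function.Injective α ∧
    (∀ g : nTorsion n E →+ nTorsion n E', β g = 0 ↔ ∃ f, α f = g) ∧
    (∀ h : nTorsion n E' →+ nTorsion n E', (∃ g, β g = h) ↔ h.comp phiLow = 0) ∧
    (∀ (σ : Γ) (f : ((nTorsion m E).map φ) →+ nTorsion m E'),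
      α ((torsMap m (ρ' σ : E' ≃+ E').toAddMonoidHom).comp
          (f.comp (restrictHom (ρ' σ⁻¹ : E' ≃+ E').toAddMonoidHom _ _ (hstab σ⁻¹))))
        = (torsMap n (ρ' σ : E' ≃+ E').toAddMonoidHom).comp
            ((α f).comp (torsMap n (ρ σ⁻¹ : E ≃+ E).toAddMonoidHom))) ∧
    (∀ (σ : Γ) (g : nTorsion n E →+ nTorsion n E'),
      β ((torsMap n (ρ' σ : E' ≃+ E').toAddMonoidHom).comp
          (g.comp (torsMap n (ρ σ⁻¹ : E ≃+ E).toAddMonoidHom)))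
        = (torsMap n (ρ' σ : E' ≃+ E').toAddMonoidHom).comp
            ((β g).comp (torsMap n (ρ' σ⁻¹ : E' ≃+ E').toAddMonoidHom))) := by
  intro m incl phiRes phiLow α β
  have : IsAddCyclic φ.ker := hφcyc
  have hdual₁' (x : E) : φdual (φ x) = d • x := by simpa using DFunLike.congr_fun hdual₁ x
  have hdual₂' (y : E') : φ (φdual y) = d • y := by simpa using DFunLike.congr_fun hdual₂ y
  have hPsurj : Function.Surjective phiRes := by
    rintro ⟨y, hy⟩
    obtain ⟨x, hx, hxy⟩ :=
      map_nTorsion_le_map_nsmul_nTorsion φ hdivE (Nat.gcd_dvd_right d n) hn hy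
    exact ⟨⟨x, hx⟩, Subtype.ext hxy⟩
  refine ⟨inclusion_comp_comp_injective _ hPsurj,
    comp_eq_zero_iff_exists_inclusion_comp _ hPsurj
      (fun b => Subtype.ext (map_nTorsion_le φ m b.2))
      (ker_restrictHom_nsmul_eq_range_torsMap φ φdual hdivE hd hφker hdual₁' hdual₂' _),
    exists_comp_eq_iff_comp_eq_zero hdivE' nsmul_nTorsion_eq_zero
      (ker_torsMap_dual_eq_range_torsMap_nsmul φ φdual hdivE hd hφsurj hφker hdual₁' hdual₂' hn),
    fun σ f => ?_, fun σ g => ?_⟩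
  · ext x
    have hx : restrictHom (ρ' σ⁻¹ : E' ≃+ E').toAddMonoidHom _ _ (hstab σ⁻¹) (phiRes x) =
        phiRes (torsMap n (ρ σ⁻¹ : E ≃+ E).toAddMonoidHom x) :=
      Subtype.ext (show (ρ' σ⁻¹ : E' ≃+ E') ((n / m) • φ x) = (n / m) • φ ((ρ σ⁻¹ : E ≃+ E) x) by
        rw [map_nsmul, hρφ])
    exact congrArg (fun v => (ρ' σ : E' ≃+ E') (f v)) hx
  · ext y
    have hy : torsMap n (ρ σ⁻¹ : E ≃+ E).toAddMonoidHom (torsMap n φdual y) =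
        torsMap n φdual (torsMap n (ρ' σ⁻¹ : E' ≃+ E').toAddMonoidHom y) :=
      Subtype.ext (hρφd σ⁻¹ y).symm
    exact congrArg (fun v => (ρ' σ : E' ≃+ E') (g v)) hy
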